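/- The formal power series identity Σ_{λ ∈ P} T^{|λ|} Π_{h ∈ H^{(b)}(λ)} (z/h) = exp(zT/(1−T)) holds in Q[z][[T]]. -/

import Mathlib

open MvPowerSeries

/-- `f` encodes a partition: weakly decreasing with finitely many nonzero parts.
`f i` is the `(i+1)`-st part `λ_{i+1}`. -/
def PartitionFun (f : ℕ → ℕ) : Prop :=
  (∀ i, f (i + 1) ≤ f i) ∧ ∃ N, ∀ i, N ≤ i → f i = 0

/-- The size `|λ|` of a partition. -/
noncomputable def psize (f : ℕ → ℕ) : ℕ := ∑ᶠ i, f i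

/-- `conj f j` is the number of parts of `f` that are `> j`, i.e. the conjugate part `λ'_{j+1}`. -/
noncomputable def conj (f : ℕ → ℕ) (j : ℕ) : ℕ := {i | j < f i}.ncard

/-- The hook length of the cell in row `i+1`, column `j+1`:
`h = λ_{i+1} + λ'_{j+1} - (i+1) - (j+1) + 1`. -/
noncomputable def hookLen (f : ℕ → ℕ) (i j : ℕ) : ℕ := f i + conj f j - i - j - 1

/-- The cell `(i+1, j+1)` is a bottom square: it lies in the diagram and has leg length 0,
i.e. `λ'_{j+1} = i + 1`. -/
noncomputable def bottomCell (f : ℕ → ℕ) (i j : ℕ) : Prop := j < f i ∧ conj f j = i + 1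

/-- `ν_i = Σ_{j ≥ i} ⌊(λ_j − λ_{j+1})/r⌋` (0-based indexing). -/
noncomputable def nuF (r : ℕ) (f : ℕ → ℕ) : ℕ → ℕ :=
  fun i => ∑ᶠ j, if i ≤ j then (f j - f (j + 1)) / r else 0

/-- `μ_i = λ_i − r·ν_i`. -/
noncomputable def muF (r : ℕ) (f : ℕ → ℕ) : ℕ → ℕ :=
  fun i => f i - r * nuF r f i

/-- An `r`-kernel: all successive part differences are `< r`. -/
def KernelFun (r : ℕ) (f : ℕ → ℕ) : Prop := ∀ i, f i - f (i + 1) < r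

/-- An `r`-core: no hook length is divisible by `r`. -/
noncomputable def RCoreFun (r : ℕ) (f : ℕ → ℕ) : Prop :=
  ∀ i j, j < f i → ¬ r ∣ hookLen f i j

/-- `f` and `g` have the same `r`-core, expressed via the abacus/β-number characterisation:
for some `N` beyond the lengths of both partitions, the multisets of residues mod `r` of the
β-numbers `{λ_i + N − i : 1 ≤ i ≤ N}` of the two partitions coincide. -/
def SameRCore (r : ℕ) (f g : ℕ → ℕ) : Prop :=
  ∃ N, (∀ i, N ≤ i → f i = 0) ∧ (∀ i, N ≤ i → g i = 0) ∧
    ∀ c, ((Finset.range N).filter fun i => (f i + N - i - 1) % r = c).card =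
         ((Finset.range N).filter fun i => (g i + N - i - 1) % r = c).card

/-- `|H_r(λ)|`: the number of cells of `λ` whose hook length is divisible by `r`. -/
noncomputable def hrCard (r : ℕ) (f : ℕ → ℕ) : ℕ :=
  {p : ℕ × ℕ | p.2 < f p.1 ∧ r ∣ hookLen f p.1 p.2}.ncard

/-- `|H^{(b)}_r(λ)|`: the number of bottom squares of `λ` whose hook length is divisible
by `r`. -/
noncomputable def botHrCard (r : ℕ) (f : ℕ → ℕ) : ℕ :=
  {p : ℕ × ℕ | bottomCell f p.1 p.2 ∧ r ∣ hookLen f p.1 p.2}.ncard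

/-- The `(σ→₀ℕ)→ℚ` product topology on multivariate formal power series, so that the
infinite sums and products below are the (coefficientwise convergent) formal ones. -/
noncomputable instance mvTop (σ : Type*) : TopologicalSpace (MvPowerSeries σ ℚ) :=
  (inferInstance : TopologicalSpace ((σ →₀ ℕ) → ℚ))

/-- `(a;q)_∞ = Π_{j≥0} (1 - a q^j)`. -/
noncomputable def qPochInf {σ : Type*} (a q : MvPowerSeries σ ℚ) : MvPowerSeries σ ℚ :=
  ∏' j : ℕ, (1 - a * q ^ j)


/-!
The bottom squares of row `i` of `λ` are the cells in columns `λ_{i+1} < j ≤ λ_i`, with hook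
lengths `1, …, λ_i - λ_{i+1}`; so a partition contributes `T^{|λ|} z^{λ_1} w(λ)` with
`w(λ) = ∏_i 1/(λ_i - λ_{i+1})!`. Comparing coefficients of `T^n z^k`, it remains to show that the
weights `w(λ)` of the partitions of `n` with largest part `k` add up to `[T^n] (T/(1-T))^k / k!`.
Removing the first row of `λ` expresses this sum through the same sums for `n - k`, and the
right-hand side obeys the same recursion because `T/(1-T) = T (1 + T/(1-T))`, whence
`(T/(1-T))^k = T^k ∑_j C(k,j) (T/(1-T))^j`.
-/

open scoped Nat

section PartitionBasics

open Finset

variable {f : ℕ → ℕ}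

theorem PartitionFun.antitone (hf : PartitionFun f) : Antitone f :=
  antitone_nat_of_succ_le hf.1

theorem psize_eq_sum_range {N : ℕ} (hN : ∀ i, N ≤ i → f i = 0) :
    psize f = ∑ i ∈ range N, f i :=
  finsum_eq_sum_of_support_subset f fun i hi => by
    simpa using not_le.1 fun h => hi (hN i h)

theorem PartitionFun.sum_range_le_psize (hf : PartitionFun f) (n : ℕ) :
    ∑ i ∈ range n, f i ≤ psize f := by
  obtain ⟨N, hN⟩ := hf.2
  rw [psize_eq_sum_range fun i hi => hN i (le_of_max_le_left hi)]
  exact sum_le_sum_of_subset (range_subset_range.2 (le_max_right N n))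

theorem PartitionFun.le_psize (hf : PartitionFun f) (i : ℕ) : f i ≤ psize f :=
  (single_le_sum (fun _ _ => Nat.zero_le _) (self_mem_range_succ i)).trans
    (hf.sum_range_le_psize (i + 1))

theorem PartitionFun.eq_zero_of_psize_le (hf : PartitionFun f) {i : ℕ} (h : psize f ≤ i) :
    f i = 0 := by
  have hsum : (i + 1) * f i ≤ psize f := by
    simpa using (card_nsmul_le_sum (range (i + 1)) f (f i)
      fun j hj => hf.antitone (mem_range_succ_iff.1 hj)).trans (hf.sum_range_le_psize (i + 1))
  nlinarith

theorem PartitionFun.lt_conj_iff (hf : PartitionFun f) (i j : ℕ) : j < f i ↔ i < conj f j := by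
  obtain ⟨N, hN⟩ := hf.2
  have hfin : {k | j < f k}.Finite :=
    (Set.finite_Iio N).subset fun k hk => Set.mem_Iio.2 (not_le.1 fun h => by simp [hN k h] at hk)
  constructor
  · intro h
    have hsub : Set.Iic i ⊆ {k | j < f k} := fun k hk => h.trans_le (hf.antitone hk)
    simpa [conj] using Set.ncard_le_ncard hsub hfin
  · contrapose!
    intro hc
    have hsub : {k | j < f k} ⊆ Set.Iio i :=
      fun k hk => not_le.1 fun hik => (hk.trans_le (hf.antitone hik)).not_ge hc
    simpa [conj] using Set.ncard_le_ncard hsub (Set.finite_Iio i)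

theorem PartitionFun.bottomCell_iff (hf : PartitionFun f) {i j : ℕ} :
    bottomCell f i j ↔ f (i + 1) ≤ j ∧ j < f i := by
  rw [bottomCell, ← not_lt, hf.lt_conj_iff i, hf.lt_conj_iff (i + 1)]
  omega

theorem hookLen_of_bottomCell {i j : ℕ} (h : bottomCell f i j) : hookLen f i j = f i - j := by
  rw [hookLen, h.2]
  omega

end PartitionBasics

noncomputable def stepWeight (f : ℕ → ℕ) : ℚ := ∏ᶠ i, ((f i - f (i + 1))! : ℚ)⁻¹

section BottomCells

open Finset

variable {f : ℕ → ℕ} {N : ℕ}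

theorem stepWeight_eq_prod_range (hN : ∀ i, N ≤ i → f i = 0) :
    stepWeight f = ∏ i ∈ range N, ((f i - f (i + 1))! : ℚ)⁻¹ :=
  finprod_eq_prod_of_mulSupport_subset _ fun i hi => by
    by_contra h
    have hi' : N ≤ i := by simpa using h
    simp [hN i hi', hN (i + 1) (by omega)] at hi

theorem PartitionFun.sum_range_sub_succ (hf : PartitionFun f) (n : ℕ) :
    ∑ i ∈ range n, (f i - f (i + 1)) = f 0 - f n := by
  induction n with
  | zero => simp
  | succ n ih =>
    rw [sum_range_succ, ih]
    have := hf.antitone (Nat.zero_le n)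
    have := hf.1 n
    omega

theorem prod_Ico_sub_eq_factorial {a b : ℕ} (h : a ≤ b) :
    ∏ j ∈ Ico a b, (b - j) = (b - a)! := by
  rw [← prod_Ico_id_eq_factorial]
  convert prod_Ico_reflect (fun j => j) a (Nat.le_succ b) using 2
  congr 1 <;> omega

theorem PartitionFun.finprod_bottomCell {M : Type*} [CommMonoid M] (hf : PartitionFun f)
    (hN : ∀ i, N ≤ i → f i = 0) (g : ℕ × ℕ → M) :
    ∏ᶠ (p : ℕ × ℕ) (_ : bottomCell f p.1 p.2), g p =
      ∏ i ∈ range N, ∏ j ∈ Ico (f (i + 1)) (f i), g (i, j) := by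
  set t := (range N ×ˢ range (f 0)).filter fun p : ℕ × ℕ => f (p.1 + 1) ≤ p.2 ∧ p.2 < f p.1
  have hmem : ∀ p : ℕ × ℕ, p ∈ t ↔ p.1 ∈ range N ∧ p.2 ∈ Ico (f (p.1 + 1)) (f p.1) := by
    rintro ⟨i, j⟩
    simp only [t, mem_filter, mem_product, mem_range, mem_Ico]
    constructor
    · rintro ⟨⟨hi, -⟩, hj⟩
      exact ⟨hi, hj⟩
    · rintro ⟨hi, hj⟩
      exact ⟨⟨hi, hj.2.trans_le (hf.antitone (Nat.zero_le i))⟩, hj⟩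
  rw [finprod_cond_eq_prod_of_cond_iff g (t := t) fun {p} _ => ?_,
    prod_finset_product t (range N) (fun i => Ico (f (i + 1)) (f i)) hmem]
  rw [hf.bottomCell_iff, hmem, mem_range, mem_Ico, iff_and_self]
  intro hp
  exact not_le.1 fun hi => by simp [hN p.1 hi] at hp

theorem PartitionFun.finprod_bottomCell_hook (hf : PartitionFun f) :
    ∏ᶠ (p : ℕ × ℕ) (_ : bottomCell f p.1 p.2),
        (X 1 : MvPowerSeries (Fin 2) ℚ) * C ((hookLen f p.1 p.2 : ℚ)⁻¹) =
      X 1 ^ f 0 * C (stepWeight f) := by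
  obtain ⟨N, hN⟩ := hf.2
  have hrow : ∀ i, ∏ j ∈ Ico (f (i + 1)) (f i),
      (X 1 : MvPowerSeries (Fin 2) ℚ) * C ((hookLen f i j : ℚ)⁻¹) =
        X 1 ^ (f i - f (i + 1)) * C ((f i - f (i + 1))! : ℚ)⁻¹ := by
    intro i
    have hle := hf.1 i
    rw [prod_mul_distrib, prod_const, Nat.card_Ico, ← map_prod, ← prod_Ico_sub_eq_factorial hle,
      Nat.cast_prod, ← prod_inv_distrib]
    refine congrArg _ (congrArg _ (prod_congr rfl fun j hj => ?_))
    rw [hookLen_of_bottomCell (hf.bottomCell_iff.2 (mem_Ico.1 hj))]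
  rw [hf.finprod_bottomCell hN, prod_congr rfl fun i _ => hrow i, prod_mul_distrib,
    prod_pow_eq_pow_sum, hf.sum_range_sub_succ, hN N le_rfl, Nat.sub_zero, ← map_prod,
    stepWeight_eq_prod_range hN]

end BottomCells

abbrev PartitionSeq := {f : ℕ → ℕ // PartitionFun f}

def consSeq (c : ℕ) (g : ℕ → ℕ) : ℕ → ℕ
  | 0 => c
  | i + 1 => g i

section FirstRow

open Finset

variable {f g : ℕ → ℕ}

theorem partitionFun_zero : PartitionFun 0 :=
  ⟨fun _ => le_rfl, 0, fun _ _ => rfl⟩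

theorem PartitionFun.tail (hf : PartitionFun f) : PartitionFun fun i => f (i + 1) :=
  ⟨fun i => hf.1 (i + 1), hf.2.imp fun _ hN i hi => hN (i + 1) (by omega)⟩

theorem PartitionFun.consSeq (hg : PartitionFun g) {c : ℕ} (h : g 0 ≤ c) :
    PartitionFun (consSeq c g) := by
  obtain ⟨N, hN⟩ := hg.2
  refine ⟨fun i => ?_, N + 1, fun i hi => ?_⟩
  · cases i with
    | zero => exact h
    | succ i => exact hg.1 i
  · cases i with
    | zero => omega
    | succ i => exact hN i (by omega)

theorem consSeq_head_tail (f : ℕ → ℕ) : consSeq (f 0) (fun i => f (i + 1)) = f := by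
  funext i
  cases i <;> rfl

theorem PartitionFun.psize_eq_add_tail (hf : PartitionFun f) :
    psize f = f 0 + psize fun i => f (i + 1) := by
  obtain ⟨N, hN⟩ := hf.2
  rw [psize_eq_sum_range (N := N + 1) fun i hi => hN i (by omega),
    psize_eq_sum_range (N := N) fun i hi => hN (i + 1) (by omega), sum_range_succ']
  omega

theorem PartitionFun.stepWeight_eq_mul_tail (hf : PartitionFun f) :
    stepWeight f = ((f 0 - f 1)! : ℚ)⁻¹ * stepWeight fun i => f (i + 1) := by
  obtain ⟨N, hN⟩ := hf.2
  rw [stepWeight_eq_prod_range (N := N + 1) fun i hi => hN i (by omega),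
    stepWeight_eq_prod_range (N := N) fun i hi => hN (i + 1) (by omega), prod_range_succ', mul_comm]

theorem finite_setOf_psize_eq (n : ℕ) : {p : PartitionSeq | psize p.1 = n}.Finite := by
  let restrict (p : {p : PartitionSeq // psize p.1 = n}) : Fin n → Fin (n + 1) :=
    fun i => ⟨p.1.1 i, Nat.lt_succ_of_le ((p.1.2.le_psize i).trans_eq p.2)⟩
  have hinj : Function.Injective restrict := by
    intro p q h
    ext i
    by_cases hi : i < n
    · simpa [restrict] using congrFun h ⟨i, hi⟩
    · rw [p.1.2.eq_zero_of_psize_le (p.2.trans_le (not_lt.1 hi)),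
        q.1.2.eq_zero_of_psize_le (q.2.trans_le (not_lt.1 hi))]
  exact Set.finite_coe_iff.1 (Finite.of_injective restrict hinj)

noncomputable def partitionsOfSize (n : ℕ) : Finset PartitionSeq :=
  (finite_setOf_psize_eq n).toFinset

theorem mem_partitionsOfSize {n : ℕ} {p : PartitionSeq} :
    p ∈ partitionsOfSize n ↔ psize p.1 = n :=
  Set.Finite.mem_toFinset _

end FirstRow

noncomputable def stepWeightSum (n k : ℕ) : ℚ :=
  ∑ p ∈ partitionsOfSize n with p.1 0 = k, stepWeight p.1

section StepWeightSum

open Finset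

theorem stepWeightSum_zero_right (n : ℕ) : stepWeightSum n 0 = if n = 0 then 1 else 0 := by
  have hzero : ∀ p : PartitionSeq, p.1 0 = 0 ↔ p = ⟨0, partitionFun_zero⟩ := by
    refine fun p => ⟨fun h => ?_, fun h => h ▸ rfl⟩
    ext i
    exact Nat.eq_zero_of_le_zero (h ▸ p.2.antitone (Nat.zero_le i))
  classical
  rw [stepWeightSum, filter_congr fun p _ => hzero p, filter_eq']
  simp only [mem_partitionsOfSize, psize, Pi.zero_apply, finsum_zero, eq_comm (a := 0)]
  split_ifs <;> simp [stepWeight]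

theorem stepWeightSum_of_lt {n k : ℕ} (h : n < k) : stepWeightSum n k = 0 := by
  refine sum_eq_zero fun p hp => ?_
  rw [mem_filter, mem_partitionsOfSize] at hp
  have := p.2.le_psize 0
  omega

theorem stepWeightSum_add_left_eq_sum_tail (k m : ℕ) :
    stepWeightSum (k + m) k = ∑ q ∈ partitionsOfSize m with q.1 0 ≤ k,
      ((k - q.1 0)! : ℚ)⁻¹ * stepWeight q.1 := by
  refine sum_bij' (fun p _ => ⟨_, p.2.tail⟩)
    (fun q hq => ⟨consSeq k q.1, q.2.consSeq (mem_filter.1 hq).2⟩) ?_ ?_ ?_ ?_ ?_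
  · intro p hp
    simp only [mem_filter, mem_partitionsOfSize] at hp ⊢
    have := p.2.psize_eq_add_tail
    have := p.2.1 0
    omega
  · intro q hq
    simp only [mem_filter, mem_partitionsOfSize] at hq ⊢
    rw [(q.2.consSeq hq.2).psize_eq_add_tail]
    exact ⟨by simp [consSeq, hq.1], rfl⟩
  · intro p hp
    ext1
    simpa [(mem_filter.1 hp).2] using consSeq_head_tail p.1
  · intro q _
    rfl
  · intro p hp
    rw [p.2.stepWeight_eq_mul_tail, (mem_filter.1 hp).2]

theorem stepWeightSum_add_left (k m : ℕ) :
    stepWeightSum (k + m) k = ∑ j ∈ range (k + 1), ((k - j)! : ℚ)⁻¹ * stepWeightSum m j := by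
  have hmaps : ∀ q ∈ (partitionsOfSize m).filter (·.1 0 ≤ k), q.1 0 ∈ range (k + 1) :=
    fun q hq => mem_range_succ_iff.2 (mem_filter.1 hq).2
  rw [stepWeightSum_add_left_eq_sum_tail, ← sum_fiberwise_of_maps_to hmaps]
  refine sum_congr rfl fun j hj => ?_
  rw [stepWeightSum, mul_sum, filter_filter]
  refine sum_congr (filter_congr fun q _ => ?_) fun q hq => by rw [(mem_filter.1 hq).2]
  exact ⟨fun h => h.2, fun h => ⟨h ▸ mem_range_succ_iff.1 hj, h⟩⟩

end StepWeightSum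

noncomputable def xDivOneSubX (K : Type*) [Field K] : PowerSeries K :=
  PowerSeries.X * (1 - PowerSeries.X)⁻¹

section XDivOneSubX

theorem xDivOneSubX_eq (K : Type*) [Field K] :
    xDivOneSubX K = PowerSeries.X * (1 + xDivOneSubX K) := by
  have h : (1 - PowerSeries.X : PowerSeries K) * (1 - PowerSeries.X)⁻¹ = 1 :=
    PowerSeries.mul_inv_cancel _ (by simp)
  unfold xDivOneSubX
  linear_combination (PowerSeries.X : PowerSeries K) * h

variable {K : Type*} [Field K]

theorem coeff_xDivOneSubX_pow_add (k m : ℕ) :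
    PowerSeries.coeff (k + m) (xDivOneSubX K ^ k) =
      ∑ j ∈ Finset.range (k + 1), (k.choose j : K) * PowerSeries.coeff m (xDivOneSubX K ^ j) := by
  conv_lhs => rw [xDivOneSubX_eq, mul_pow, add_comm 1, add_pow, add_comm k,
    PowerSeries.coeff_X_pow_mul, map_sum]
  refine Finset.sum_congr rfl fun j _ => ?_
  rw [one_pow, mul_one, ← map_natCast (PowerSeries.C (R := K)), PowerSeries.coeff_mul_C, mul_comm]

theorem coeff_xDivOneSubX_pow_of_lt {k n : ℕ} (h : n < k) :
    PowerSeries.coeff n (xDivOneSubX K ^ k) = 0 := by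
  rw [xDivOneSubX_eq, mul_pow, PowerSeries.coeff_X_pow_mul', if_neg (by omega)]

end XDivOneSubX

theorem stepWeightSum_eq (n k : ℕ) :
    stepWeightSum n k = (k ! : ℚ)⁻¹ * PowerSeries.coeff n (xDivOneSubX ℚ ^ k) := by
  induction n using Nat.strong_induction_on generalizing k with
  | _ n ih =>
  rcases Nat.eq_zero_or_pos k with rfl | hk
  · simp [stepWeightSum_zero_right, PowerSeries.coeff_one]
  rcases lt_or_ge n k with hlt | hle
  · rw [stepWeightSum_of_lt hlt, coeff_xDivOneSubX_pow_of_lt hlt, mul_zero]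
  obtain ⟨m, rfl⟩ := Nat.exists_eq_add_of_le hle
  rw [stepWeightSum_add_left, coeff_xDivOneSubX_pow_add, Finset.mul_sum]
  refine Finset.sum_congr rfl fun j hj => ?_
  rw [ih m (by omega) j, Nat.cast_choose ℚ (Finset.mem_range_succ_iff.1 hj)]
  field_simp

theorem coeff_tsum_of_support_finite {ι σ : Type*} (F : ι → MvPowerSeries σ ℚ)
    (hF : ∀ m, (Function.support fun i => coeff m (F i)).Finite) (m : σ →₀ ℕ) :
    coeff m (∑' i, F i) = ∑ᶠ i, coeff m (F i) := by
  have hsum : Summable F := Pi.summable.2 fun m => summable_of_hasFiniteSupport (hF m)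
  exact (tsum_apply hsum).trans (tsum_eq_finsum (hF m))

theorem X_mul_inv_one_sub_X_pow_eq_subst {K σ : Type*} [Field K] (s : σ) (k : ℕ) :
    ((X s : MvPowerSeries σ K) * (1 - X s)⁻¹) ^ k =
      PowerSeries.subst (X s) (xDivOneSubX K ^ k) := by
  have hs : PowerSeries.HasSubst (X s : MvPowerSeries σ K) := PowerSeries.HasSubst.X s
  have hX : PowerSeries.substAlgHom hs (PowerSeries.X : PowerSeries K) = X s := by
    rw [PowerSeries.coe_substAlgHom, PowerSeries.subst_X hs]
  have hinv : PowerSeries.substAlgHom hs (1 - PowerSeries.X : PowerSeries K)⁻¹ = (1 - X s)⁻¹ := by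
    have h1 : (1 - X s : MvPowerSeries σ K) =
        PowerSeries.substAlgHom hs (1 - PowerSeries.X : PowerSeries K) := by
      rw [map_sub, map_one, hX]
    rw [MvPowerSeries.eq_inv_iff_mul_eq_one (by simp), h1, ← map_mul,
      PowerSeries.inv_mul_cancel _ (by simp), map_one]
  rw [← PowerSeries.coe_substAlgHom hs, map_pow, xDivOneSubX, map_mul, hX, hinv]

theorem coeff_X_one_pow_mul_subst {R : Type*} [CommRing R] (k : ℕ) (ψ : PowerSeries R)
    (m : Fin 2 →₀ ℕ) :
    coeff m ((X 1 : MvPowerSeries (Fin 2) R) ^ k * PowerSeries.subst (X 0) ψ) =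
      if m 1 = k then PowerSeries.coeff (m 0) ψ else 0 := by
  rw [X_pow_eq, coeff_monomial_mul, PowerSeries.coeff_subst_single, one_mul]
  by_cases hk : m 1 = k
  · have hle : Finsupp.single 1 k ≤ m := by simp [Finsupp.single_le_iff, hk]
    have hsub : m - Finsupp.single 1 k = Finsupp.single 0 (m 0) := by
      ext i
      fin_cases i <;> simp [hk]
    simp [hle, hsub, hk]
  · rw [if_neg hk, ite_eq_right_iff]
    refine fun hle => if_neg fun hsub => hk ?_
    have := DFunLike.congr_fun hsub 1
    simp [Finsupp.single_le_iff] at hle this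
    omega

section Coefficients

open Finset

theorem coeff_X_zero_pow_mul_X_one_pow_mul_C {R : Type*} [CommSemiring R] (n k : ℕ) (w : R)
    (m : Fin 2 →₀ ℕ) :
    coeff m ((X 0 : MvPowerSeries (Fin 2) R) ^ n * (X 1 ^ k * C w)) =
      if m 0 = n ∧ m 1 = k then w else 0 := by
  rw [X_pow_eq, X_pow_eq, ← monomial_zero_eq_C_apply, monomial_mul_monomial,
    monomial_mul_monomial, coeff_monomial, one_mul, one_mul]
  congr 1
  simp [Finsupp.ext_iff, Fin.forall_fin_two]

theorem coeff_tsum_partitions (m : Fin 2 →₀ ℕ) :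
    coeff m (∑' p : PartitionSeq,
      (X 0 : MvPowerSeries (Fin 2) ℚ) ^ psize p.1 * (X 1 ^ p.1 0 * C (stepWeight p.1))) =
        stepWeightSum (m 0) (m 1) := by
  have hsupp : ∀ m : Fin 2 →₀ ℕ, (Function.support fun p : PartitionSeq =>
      coeff m ((X 0 : MvPowerSeries (Fin 2) ℚ) ^ psize p.1 * (X 1 ^ p.1 0 * C (stepWeight p.1))))
        ⊆ partitionsOfSize (m 0) := by
    intro m p hp
    rw [Function.mem_support, coeff_X_zero_pow_mul_X_one_pow_mul_C, ne_eq, ite_eq_right_iff,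
      Classical.not_imp] at hp
    exact mem_partitionsOfSize.2 hp.1.1.symm
  rw [coeff_tsum_of_support_finite _ (fun m => (finite_toSet _).subset (hsupp m)),
    finsum_eq_sum_of_support_subset _ (hsupp m), stepWeightSum, sum_filter]
  refine sum_congr rfl fun p hp => ?_
  rw [coeff_X_zero_pow_mul_X_one_pow_mul_C, mem_partitionsOfSize.1 hp]
  simp [eq_comm]

theorem smul_X_one_mul_X_zero_mul_inv_pow {K : Type*} [Field K] (c : K) (k : ℕ) :
    c • ((X 1 : MvPowerSeries (Fin 2) K) * X 0 * (1 - X 0)⁻¹) ^ k =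
      X 1 ^ k * PowerSeries.subst (X 0) (c • xDivOneSubX K ^ k) := by
  rw [mul_assoc, mul_pow, X_mul_inv_one_sub_X_pow_eq_subst, ← mul_smul_comm,
    ← PowerSeries.coe_substAlgHom (PowerSeries.HasSubst.X 0), map_smul]

theorem coeff_tsum_X_one_pow_mul_subst (ψ : ℕ → PowerSeries ℚ) (m : Fin 2 →₀ ℕ) :
    coeff m (∑' k, (X 1 : MvPowerSeries (Fin 2) ℚ) ^ k * PowerSeries.subst (X 0) (ψ k)) =
      PowerSeries.coeff (m 0) (ψ (m 1)) := by
  have hsupp : ∀ m : Fin 2 →₀ ℕ, (Function.support fun k =>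
      coeff m ((X 1 : MvPowerSeries (Fin 2) ℚ) ^ k * PowerSeries.subst (X 0) (ψ k))) ⊆ {m 1} := by
    intro m k hk
    rw [Function.mem_support, coeff_X_one_pow_mul_subst, ne_eq, ite_eq_right_iff,
      Classical.not_imp] at hk
    exact hk.1.symm
  rw [coeff_tsum_of_support_finite _ (fun m => (Set.finite_singleton _).subset (hsupp m)),
    finsum_eq_single _ (m 1) fun k hk => by rw [coeff_X_one_pow_mul_subst, if_neg (Ne.symm hk)],
    coeff_X_one_pow_mul_subst, if_pos rfl]

end Coefficients

/-- With `T = X 0`, `z = X 1`: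
`Σ_λ T^{|λ|} Π_{h∈H^{(b)}(λ)} (z/h) = exp(zT/(1−T))`, where
`exp(zT/(1−T)) = Σ_{k≥0} (zT/(1−T))^k / k!`. -/
theorem stmt16 :
    (∑' lam : {f : ℕ → ℕ // PartitionFun f},
        (X 0 : MvPowerSeries (Fin 2) ℚ) ^ psize lam.1 *
          ∏ᶠ (p : ℕ × ℕ) (_ : bottomCell lam.1 p.1 p.2),
            (X 1 : MvPowerSeries (Fin 2) ℚ) *
              C (σ := Fin 2) (R := ℚ) ((hookLen lam.1 p.1 p.2 : ℚ)⁻¹)) =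
      ∑' k : ℕ, ((Nat.factorial k : ℚ)⁻¹) •
        ((X 1 : MvPowerSeries (Fin 2) ℚ) * (X 0) * (1 - X 0)⁻¹) ^ k := by
  ext m
  rw [tsum_congr fun p => congrArg _ p.2.finprod_bottomCell_hook, coeff_tsum_partitions,
    tsum_congr fun k => smul_X_one_mul_X_zero_mul_inv_pow _ k, coeff_tsum_X_one_pow_mul_subst,
    PowerSeries.coeff_smul, smul_eq_mul, stepWeightSum_eq]
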